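/- Let (T̂, {B_x}) be the cut decomposition of a digraph H rooted at r, and let R be the set of arcs uv of H such that u ∈ B_x for some node x ∈ T̂ and v is an ancestor of x in T̂ (i.e., x lies in the subtree of T̂ rooted at v). Then every out-tree T of H rooted at r satisfies A(T) ∩ R = ∅. -/

import Mathlib

/-!
By induction down the decomposition tree, every path of `H` from `r` to a vertex of `B*_v`
passes through `v` and stays inside `B*_v` afterwards. In the inductive step from a node `w`
to its child `v`, the part of the path after `w` runs inside `B*_w` and ends in the class
`X_v`, so it leaves `B_w` for the last time at `v`; every later vertex lies in the class of the
bottleneck at which its prefix last left `B_w`, and that bottleneck is again `v`.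

Hence the path of an out-tree `T` from `r` to a vertex `u ∈ B_x`, with `x` below `v`, passes
through `v`. An arc `uv` of `T` would then give `v` a second in-arc in `T`, besides the one
the path uses to reach it.
-/

namespace CutPaper

variable {V : Type*}

/-- A directed path in the digraph `A`, given as a nonempty list of distinct
vertices from `u` to `v` with consecutive vertices joined by arcs. -/
def IsPath (A : V → V → Prop) (p : List V) (u v : V) : Prop :=
  p.Chain' A ∧ p.head? = some u ∧ p.getLast? = some v ∧ p.Nodup

/-- `v` is reachable from `u` in the digraph `A`. -/
def Reaches (A : V → V → Prop) (u v : V) : Prop := ∃ p, IsPath A p u v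

/-- Two paths from `r` to `v` are internally disjoint: they share only `r` and `v`. -/
def IntDisj (p q : List V) (r v : V) : Prop :=
  ∀ x, x ∈ p → x ∈ q → x = r ∨ x = v

/-- `v` is bi-reachable from `r`: there are two (distinct) internally
vertex-disjoint paths from `r` to `v`. -/
def BiReachable (A : V → V → Prop) (r v : V) : Prop :=
  ∃ p q, p ≠ q ∧ IsPath A p r v ∧ IsPath A q r v ∧ IntDisj p q r v

/-- The diblock of `r`: bi-reachable vertices together with `r` and its out-neighbours. -/
def diblock (A : V → V → Prop) (r : V) : Set V :=
  {v | BiReachable A r v} ∪ {r} ∪ {v | A r v}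

/-- The subdigraph of `A` induced on a vertex set `S`. -/
def Asub (A : V → V → Prop) (S : Set V) : V → V → Prop :=
  fun u v => A u v ∧ u ∈ S ∧ v ∈ S

/-- The path `p` meets the set `B` for the last time in `x`. -/
def LastTouch (B : Set V) (p : List V) (x : V) : Prop :=
  ∃ p₁ p₂, p = p₁ ++ x :: p₂ ∧ x ∈ B ∧ ∀ y ∈ p₂, y ∉ B

/-- `T` is an out-tree with vertex set `S` and root `r`, as a subdigraph of `A`. -/
structure IsOutTree (A T : V → V → Prop) (S : Set V) (r : V) : Prop where
  sub : ∀ u v, T u v → A u v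
  mem : ∀ u v, T u v → u ∈ S ∧ v ∈ S
  root_mem : r ∈ S
  no_in_root : ∀ u, ¬ T u r
  unique_in : ∀ v ∈ S, v ≠ r → ∃! u, T u v
  reach : ∀ v ∈ S, Reaches T r v

/-- `T` is an in-tree with vertex set `S` and root `r`, as a subdigraph of `A`. -/
def IsInTree (A T : V → V → Prop) (S : Set V) (r : V) : Prop :=
  IsOutTree (fun u v => A v u) (fun u v => T v u) S r

/-- The leaves (vertices of out-degree zero) of an out-tree `T` on vertex set `S`. -/
def leaves (T : V → V → Prop) (S : Set V) : Set V :=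
  {v | v ∈ S ∧ ∀ u, ¬ T v u}

/-- The leaves (vertices of in-degree zero) of an in-tree `T` on vertex set `S`. -/
def inLeaves (T : V → V → Prop) (S : Set V) : Set V :=
  {v | v ∈ S ∧ ∀ u, ¬ T u v}

/-- The raw data of a rooted cut decomposition: a node set, a parent map,
and an assignment of diblocks to nodes. -/
structure PreDecomp (V : Type*) where
  N : Set V
  parent : V → V
  B : V → Set V

/-- One step up the decomposition tree rooted at `r`. -/
def Step (d : PreDecomp V) (r : V) (a b : V) : Prop :=
  a ∈ d.N ∧ a ≠ r ∧ d.parent a = b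

/-- `x` is an ancestor (not necessarily proper) of `y` in the decomposition tree. -/
def Anc (d : PreDecomp V) (r : V) (x y : V) : Prop :=
  Relation.ReflTransGen (Step d r) y x

/-- `y` is a child of `x` in the decomposition tree. -/
def IsChild (d : PreDecomp V) (r : V) (y x : V) : Prop :=
  y ∈ d.N ∧ y ≠ r ∧ d.parent y = x

/-- `B*_x`: the union of the diblocks over the subtree rooted at `x`. -/
def Bstar (d : PreDecomp V) (r : V) (x : V) : Set V :=
  {v | ∃ y ∈ d.N, Anc d r x y ∧ v ∈ d.B y}

/-- The partition class `X_y` of a bottleneck `y` of the diblock of `x`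
inside `B*_x`: the vertices below `B x` whose access paths from `x`
leave `B x` for the last time at `y`. -/
def PartClass (A : V → V → Prop) (d : PreDecomp V) (r x y : V) : Set V :=
  {v | v ∈ Bstar d r x ∧ v ∉ d.B x ∧
    ∀ p, IsPath (Asub A (Bstar d r x)) p x v → LastTouch (d.B x) p y}

/-- `d` is the `r`-rooted cut decomposition of the digraph `A`:
the tree is well-founded towards the root `r`, the diblocks cover all vertices,
each `B x` is the diblock of `x` in the subdigraph induced on `B*_x`,
the children of `x` are exactly the bottlenecks of `B x`, and the subtree of a
child `y` spans exactly `{y}` together with the partition class of `y`. -/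
structure IsCutDecomp (A : V → V → Prop) (r : V) (d : PreDecomp V) : Prop where
  root_mem : r ∈ d.N
  parent_mem : ∀ x ∈ d.N, x ≠ r → d.parent x ∈ d.N
  tree : ∀ x ∈ d.N, Anc d r r x
  cover : Bstar d r r = Set.univ
  diblock_eq : ∀ x ∈ d.N, d.B x = diblock (Asub A (Bstar d r x)) x
  child_iff : ∀ x ∈ d.N, ∀ y,
    IsChild d r y x ↔ (y ∈ d.B x ∧ y ≠ x ∧ (PartClass A d r x y).Nonempty)
  child_part : ∀ x ∈ d.N, ∀ y, IsChild d r y x →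
    Bstar d r y = insert y (PartClass A d r x y)

section Paths

variable {A : V → V → Prop} {p p₁ p₂ : List V} {u v w : V}

lemma IsPath.mono {A' : V → V → Prop} (hAA' : ∀ a b, A a b → A' a b) (hp : IsPath A p u w) :
    IsPath A' p u w :=
  ⟨List.IsChain.imp (fun a b => hAA' a b) hp.1, hp.2⟩

lemma IsPath.asub {S : Set V} (hp : IsPath A p u w) (hS : ∀ y ∈ p, y ∈ S) :
    IsPath (Asub A S) p u w :=
  ⟨List.IsChain.imp_of_mem_imp (fun a b ha hb hab => ⟨hab, hS a ha, hS b hb⟩) hp.1, hp.2⟩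

lemma IsPath.suffix (hp : IsPath A p u w) (he : p = p₁ ++ v :: p₂) : IsPath A (v :: p₂) v w := by
  obtain ⟨hc, -, hl, hnd⟩ := hp
  subst he
  exact ⟨List.IsChain.suffix hc (List.suffix_append _ _), rfl,
    (List.getLast?_append_cons _ _ _).symm.trans hl, hnd.sublist (List.sublist_append_right _ _)⟩

lemma IsPath.prefix (hp : IsPath A p u w) (he : p = p₁ ++ v :: p₂) :
    IsPath A (p₁ ++ [v]) u v := by
  obtain ⟨hc, hh, -, hnd⟩ := hp
  have hpre : p₁ ++ [v] <+: p := ⟨p₂, by simp [he]⟩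
  refine ⟨List.IsChain.prefix hc hpre, ?_, List.getLast?_concat, hnd.sublist hpre.sublist⟩
  rw [he, show p₁ ++ v :: p₂ = (p₁ ++ [v]) ++ p₂ by simp,
    List.head?_append_of_ne_nil _ (by simp)] at hh
  exact hh

end Paths

lemma LastTouch.unique {B : Set V} {p : List V} {a b : V}
    (ha : LastTouch B p a) (hb : LastTouch B p b) : a = b := by
  obtain ⟨p₁, p₂, rfl, haB, hp₂⟩ := ha
  obtain ⟨q₁, q₂, hpq, hbB, hq₂⟩ := hb
  have hsa : a :: p₂ <:+ q₁ ++ b :: q₂ := hpq ▸ List.suffix_append p₁ _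
  rcases List.suffix_or_suffix_of_suffix hsa (List.suffix_append q₁ _) with h | h
  · rcases List.suffix_cons_iff.1 h with h | h
    · exact (List.cons_eq_cons.1 h).1
    · exact absurd haB (hq₂ a (h.subset List.mem_cons_self))
  · rcases List.suffix_cons_iff.1 h with h | h
    · exact (List.cons_eq_cons.1 h).1.symm
    · exact absurd hbB (hp₂ b (h.subset List.mem_cons_self))

lemma IsOutTree.not_mem_path_of_arc {A T : V → V → Prop} {S : Set V} {r u v : V} {p : List V}
    (hT : IsOutTree A T S r) (huv : T u v) (hp : IsPath T p r u) : v ∉ p := by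
  intro hv
  obtain ⟨p₁, p₂, rfl⟩ := List.append_of_mem hv
  have hvr : v ≠ r := fun h => hT.no_in_root u (h ▸ huv)
  obtain ⟨z, hz⟩ : ∃ z, p₁.getLast? = some z := by
    refine Option.isSome_iff_exists.1 (List.getLast?_isSome.2 fun h => hvr ?_)
    simpa [h] using hp.2.1
  have hzv : T z v := (List.isChain_append.1 hp.1).2.2 z hz v rfl
  have hzu : z = u := (hT.unique_in v (hT.mem u v huv).2 hvr).unique hzv huv
  have hu : u ∈ v :: p₂ :=
    List.mem_of_getLast? ((List.getLast?_append_cons _ _ _).symm.trans hp.2.2.1)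
  exact (List.nodup_append.1 hp.2.2.2).2.2 z (List.mem_of_getLast? hz) u hu hzu

section CutDecomp

variable {A : V → V → Prop} {r : V} {d : PreDecomp V}

lemma IsCutDecomp.mem_Bstar_self (h : IsCutDecomp A r d) {x : V} (hx : x ∈ d.N) :
    x ∈ Bstar d r x := by
  refine ⟨x, hx, Relation.ReflTransGen.refl, ?_⟩
  rw [h.diblock_eq x hx]
  exact Or.inl (Or.inr rfl)

lemma Bstar_subset_of_step {v w : V} (hs : Step d r v w) : Bstar d r v ⊆ Bstar d r w :=
  fun _ ⟨z, hz, hanc, hy⟩ => ⟨z, hz, hanc.tail hs, hy⟩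

lemma IsCutDecomp.exists_mem_partClass (h : IsCutDecomp A r d) {w y : V} (hw : w ∈ d.N)
    (hy : y ∈ Bstar d r w) (hyB : y ∉ d.B w) :
    ∃ c, IsChild d r c w ∧ y ∈ PartClass A d r w c := by
  obtain ⟨z, hz, hanc, hyz⟩ := hy
  rcases Relation.ReflTransGen.cases_tail hanc with rfl | ⟨c, hzc, hcw⟩
  · exact absurd hyz hyB
  · have hyc : y ∈ Bstar d r c := ⟨z, hz, hzc, hyz⟩
    rw [h.child_part w hw c hcw] at hyc
    rcases hyc with rfl | hyc
    · exact absurd ((h.child_iff w hw y).1 hcw).1 hyB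
    · exact ⟨c, hcw, hyc⟩

lemma IsCutDecomp.exists_split_of_isChild (h : IsCutDecomp A r d) {v w u : V} {q : List V}
    (hw : w ∈ d.N) (hvw : IsChild d r v w) (hq : IsPath A q w u)
    (hqS : ∀ y ∈ q, y ∈ Bstar d r w) (hu : u ∈ Bstar d r v) :
    ∃ q₁ q₂, q = q₁ ++ v :: q₂ ∧ ∀ y ∈ v :: q₂, y ∈ Bstar d r v := by
  have hv : v ∈ Bstar d r v := h.mem_Bstar_self hvw.1
  rw [h.child_part w hw v hvw] at hu
  rcases hu with rfl | hu
  · exact ⟨q.dropLast, [], (List.dropLast_append_getLast? _ hq.2.2.1).symm, by simpa using hv⟩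
  have hqS' := hq.asub hqS
  obtain ⟨q₁, q₂, rfl, hvB, hq₂⟩ := hu.2.2 q hqS'
  refine ⟨q₁, q₂, rfl, ?_⟩
  intro y hy
  rcases List.mem_cons.1 hy with rfl | hy
  · exact hv
  obtain ⟨c, hcw, hyc⟩ :=
    h.exists_mem_partClass hw (hqS y (by simp [hy])) (hq₂ y hy)
  obtain ⟨a, b, rfl⟩ := List.append_of_mem hy
  have hlast_c : LastTouch (d.B w) (q₁ ++ v :: a ++ [y]) c :=
    hyc.2.2 _ (hqS'.prefix (p₂ := b) (by simp))
  have hlast_v : LastTouch (d.B w) (q₁ ++ v :: a ++ [y]) v :=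
    ⟨q₁, a ++ [y], by simp, hvB, fun z hz => hq₂ z (by simp at hz ⊢; tauto)⟩
  obtain rfl := hlast_c.unique hlast_v
  rw [h.child_part w hw c hcw]
  exact Or.inr hyc

lemma IsCutDecomp.exists_split_of_mem_Bstar (h : IsCutDecomp A r d) {v u : V}
    (hv : Anc d r r v) (hu : u ∈ Bstar d r v) {p : List V} (hp : IsPath A p r u) :
    ∃ p₁ p₂, p = p₁ ++ v :: p₂ ∧ ∀ y ∈ v :: p₂, y ∈ Bstar d r v := by
  induction hv using Relation.ReflTransGen.head_induction_on with
  | refl =>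
    obtain ⟨t, rfl⟩ := List.head?_eq_some_iff.1 hp.2.1
    exact ⟨[], t, rfl, fun _ _ => h.cover ▸ trivial⟩
  | @head v w hs _ ih =>
    obtain ⟨p₁, p₂, rfl, hp₂⟩ := ih (Bstar_subset_of_step hs hu)
    have hw : w ∈ d.N := hs.2.2 ▸ h.parent_mem v hs.1 hs.2.1
    obtain ⟨q₁, q₂, hq, hq₂⟩ := h.exists_split_of_isChild hw hs (hp.suffix rfl) hp₂ hu
    exact ⟨p₁ ++ q₁, q₂, by simp [hq], hq₂⟩

end CutDecomp

theorem cutDecomp_no_back_arc_in_outTree_general {V : Type*}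
    (A : V → V → Prop) (r : V)
    (d : PreDecomp V) (h : IsCutDecomp A r d)
    (T : V → V → Prop) (S : Set V) (hT : IsOutTree A T S r) :
    ∀ u v, T u v → ¬ ∃ x ∈ d.N, u ∈ d.B x ∧ v ∈ d.N ∧ Anc d r v x := by
  rintro u v huv ⟨x, hx, hux, hv, hvx⟩
  obtain ⟨p, hp⟩ := hT.reach u (hT.mem u v huv).1
  obtain ⟨p₁, p₂, rfl, -⟩ :=
    h.exists_split_of_mem_Bstar (h.tree v hv) ⟨x, hx, hvx, hux⟩ (hp.mono hT.sub)
  exact hT.not_mem_path_of_arc huv hp (by simp)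

/-- no out-tree rooted at `r` uses an arc from a diblock `B x`
to an ancestor `v` of `x` in the decomposition tree. -/
theorem cutDecomp_no_back_arc_in_outTree {V : Type*}
    (A : V → V → Prop) (r : V) (hreach : ∀ v, Reaches A r v)
    (d : PreDecomp V) (h : IsCutDecomp A r d)
    (T : V → V → Prop) (S : Set V) (hT : IsOutTree A T S r) :
    ∀ u v, T u v → ¬ ∃ x ∈ d.N, u ∈ d.B x ∧ v ∈ d.N ∧ Anc d r v x :=
  cutDecomp_no_back_arc_in_outTree_general A r d h T S hT

end CutPaper
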